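/- arXiv:2007.04635 — 2 statements merged into one kernel-verified Lean document; each statement's English description precedes it below -/
import Mathlib

section
/- Let ν, r > 0, N ∈ ℕ, p ∈ (1,∞), let η_0, η_1, …, η_{N+1} ∈ ℝ^d be points with |η_{j+1} − η_j| ≤ r for all j, and suppose r(1 + 2ν) ≤ r'. Let F ⊆ ℝ^d be measurable, let B_j := F ∩ B(η_j, νr) and assume each B_j has positive finite measure. Then for any measurable u on F, ∫_{B_0 × B_{N+1}} |u(x) − u(y)|^p dx dy ≤ (N+1)^{p−1} · max_j (|B_0||B_{N+1}| / (|B_j||B_{j−1}|) ) · Σ_{j=1}^{N+1} ∫_{(B_j × B_{j−1})} |u(ξ)−u(ζ)|^p dξ dζ, and each set B_j × B_{j−1} is contained in (F × F) ∩ D_{r'}, where D_{r'} = {(x,y) : |x−y| ≤ r'}. Consequently the double-difference integral between the endpoints of a discrete chain of overlapping balls is controlled by short-range double-difference integrals. -/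
/-!
Normalising the restriction of Lebesgue measure to each `B j` to a probability measure
`μ j`, the double-difference integral of `μ i ⊗ μ k`, raised to the power `1 / p`, obeys a
triangle inequality: this is Minkowski's inequality on `μ i ⊗ μ j ⊗ μ k` applied to
`|u x - u z| ≤ |u x - u y| + |u y - u z|`. Chaining it along the `N + 1` links and applying
the power-mean inequality `(∑ aⱼ)^p ≤ (N + 1)^(p - 1) ∑ aⱼ^p` gives the estimate, and undoing
the normalisation produces the mass ratios. The inclusion is the triangle inequality
`|x - y| ≤ νr + r + νr`.
-/

open MeasureTheory ProbabilityTheory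
open scoped ENNReal

theorem prod_inter_closedBall_subset_inter_dist_le {X : Type*} [PseudoMetricSpace X]
    (F : Set X) {x y : X} {ρ r r' : ℝ} (hxy : dist x y ≤ r) (hr' : r + 2 * ρ ≤ r') :
    (F ∩ Metric.closedBall x ρ) ×ˢ (F ∩ Metric.closedBall y ρ) ⊆
      (F ×ˢ F) ∩ {z : X × X | dist z.1 z.2 ≤ r'} := by
  rintro ⟨a, b⟩ ⟨⟨haF, ha⟩, ⟨hbF, hb⟩⟩
  refine ⟨⟨haF, hbF⟩, ?_⟩
  rw [Metric.mem_closedBall] at ha hb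
  calc dist a b ≤ dist a x + dist x y + dist y b := dist_triangle4 a x y b
    _ ≤ ρ + r + ρ := by rw [dist_comm y b]; gcongr
    _ ≤ r' := by linarith

section DoubleDifference

variable {α : Type*} [MeasurableSpace α] (p : ℝ) (u : α → ℝ)

noncomputable def doubleDiffIntegral (μ ν : Measure α) : ℝ≥0∞ :=
  ∫⁻ z, ENNReal.ofReal (|u z.1 - u z.2| ^ p) ∂μ.prod ν

variable {p u}

theorem doubleDiffIntegral_comm (μ ν : Measure α) [SFinite μ] [SFinite ν] :
    doubleDiffIntegral p u μ ν = doubleDiffIntegral p u ν μ := by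
  rw [doubleDiffIntegral, ← lintegral_prod_swap]
  simp only [doubleDiffIntegral, Prod.fst_swap, Prod.snd_swap, abs_sub_comm]

theorem setLIntegral_prod_eq_mul_doubleDiffIntegral_cond (μ : Measure α) [SFinite μ]
    {s t : Set α} (hs₀ : μ s ≠ 0) (hs : μ s ≠ ∞) (ht₀ : μ t ≠ 0) (ht : μ t ≠ ∞) :
    ∫⁻ z in s ×ˢ t, ENNReal.ofReal (|u z.1 - u z.2| ^ p) ∂μ.prod μ =
      μ s * μ t * doubleDiffIntegral p u μ[|s] μ[|t] := by
  rw [doubleDiffIntegral, ProbabilityTheory.cond, ProbabilityTheory.cond,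
    Measure.prod_smul_left, Measure.prod_smul_right, smul_smul, lintegral_smul_measure,
    Measure.prod_restrict, smul_eq_mul, ← mul_assoc, mul_mul_mul_comm,
    ENNReal.mul_inv_cancel hs₀ hs, ENNReal.mul_inv_cancel ht₀ ht, one_mul, one_mul]

theorem doubleDiffIntegral_rpow_le_add (hp : 1 ≤ p) (hu : Measurable u)
    (μ₀ μ₁ μ₂ : Measure α) [IsProbabilityMeasure μ₀] [IsProbabilityMeasure μ₁]
    [IsProbabilityMeasure μ₂] :
    doubleDiffIntegral p u μ₀ μ₂ ^ (1 / p) ≤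
      doubleDiffIntegral p u μ₀ μ₁ ^ (1 / p) + doubleDiffIntegral p u μ₁ μ₂ ^ (1 / p) := by
  have hp₀ : 0 ≤ p := by linarith
  let δ : α × α → ℝ≥0∞ := fun z => ENNReal.ofReal |u z.1 - u z.2|
  have hδ : Measurable δ := by fun_prop
  have hD : ∀ μ ν : Measure α, doubleDiffIntegral p u μ ν = ∫⁻ z, δ z ^ p ∂μ.prod ν :=
    fun μ ν => lintegral_congr fun z => (ENNReal.ofReal_rpow_of_nonneg (abs_nonneg _) hp₀).symm
  let P := μ₀.prod (μ₁.prod μ₂)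
  have h₀₂ : MeasurePreserving (Prod.map id Prod.snd) P (μ₀.prod μ₂) :=
    (MeasurePreserving.id μ₀).prod measurePreserving_snd
  have h₀₁ : MeasurePreserving (Prod.map id Prod.fst) P (μ₀.prod μ₁) :=
    (MeasurePreserving.id μ₀).prod measurePreserving_fst
  have h₁₂ : MeasurePreserving Prod.snd P (μ₁.prod μ₂) := measurePreserving_snd
  calc doubleDiffIntegral p u μ₀ μ₂ ^ (1 / p)
      = (∫⁻ x, δ (x.1, x.2.2) ^ p ∂P) ^ (1 / p) := by
        rw [hD, ← h₀₂.lintegral_comp (hδ.pow_const p)]; rfl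
    _ ≤ (∫⁻ x, (δ (x.1, x.2.1) + δ (x.2.1, x.2.2)) ^ p ∂P) ^ (1 / p) := by
        gcongr with x
        rw [← ENNReal.ofReal_add (abs_nonneg _) (abs_nonneg _)]
        exact ENNReal.ofReal_le_ofReal (abs_sub_le _ _ _)
    _ ≤ (∫⁻ x, δ (x.1, x.2.1) ^ p ∂P) ^ (1 / p) + (∫⁻ x, δ x.2 ^ p ∂P) ^ (1 / p) :=
        ENNReal.lintegral_Lp_add_le (by fun_prop) (by fun_prop) hp
    _ = _ := by
        rw [hD, hD, ← h₀₁.lintegral_comp (hδ.pow_const p),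
          ← h₁₂.lintegral_comp (hδ.pow_const p)]; rfl

theorem doubleDiffIntegral_rpow_le_sum_chain (hp : 1 ≤ p) (hu : Measurable u) :
    ∀ (n : ℕ) (μ : Fin (n + 2) → Measure α) [∀ j, IsProbabilityMeasure (μ j)],
      doubleDiffIntegral p u (μ 0) (μ (Fin.last (n + 1))) ^ (1 / p) ≤
        ∑ j : Fin (n + 1), doubleDiffIntegral p u (μ j.succ) (μ j.castSucc) ^ (1 / p)
  | 0, μ, _ => by simp [doubleDiffIntegral_comm (μ 0)]
  | n + 1, μ, _ => by
    rw [Fin.sum_univ_castSucc]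
    calc doubleDiffIntegral p u (μ 0) (μ (Fin.last (n + 2))) ^ (1 / p)
        ≤ doubleDiffIntegral p u (μ 0) (μ (Fin.last (n + 1)).castSucc) ^ (1 / p) +
            doubleDiffIntegral p u (μ (Fin.last (n + 1)).castSucc) (μ (Fin.last (n + 2))) ^
              (1 / p) :=
          doubleDiffIntegral_rpow_le_add hp hu _ _ _
      _ ≤ _ := by
        gcongr
        · exact doubleDiffIntegral_rpow_le_sum_chain hp hu n fun j => μ j.castSucc
        · rw [doubleDiffIntegral_comm, Fin.succ_last]

theorem doubleDiffIntegral_le_card_rpow_mul_sum_chain (hp : 1 ≤ p) (hu : Measurable u)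
    (n : ℕ) (μ : Fin (n + 2) → Measure α) [∀ j, IsProbabilityMeasure (μ j)] :
    doubleDiffIntegral p u (μ 0) (μ (Fin.last (n + 1))) ≤
      ((n + 1 : ℕ) : ℝ≥0∞) ^ (p - 1) *
        ∑ j : Fin (n + 1), doubleDiffIntegral p u (μ j.succ) (μ j.castSucc) := by
  have hp₀ : p ≠ 0 := by linarith
  have hroot : ∀ x : ℝ≥0∞, (x ^ (1 / p)) ^ p = x := fun x => by
    rw [← ENNReal.rpow_mul, one_div_mul_cancel hp₀, ENNReal.rpow_one]
  calc doubleDiffIntegral p u (μ 0) (μ (Fin.last (n + 1)))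
      = (doubleDiffIntegral p u (μ 0) (μ (Fin.last (n + 1))) ^ (1 / p)) ^ p := (hroot _).symm
    _ ≤ (∑ j : Fin (n + 1), doubleDiffIntegral p u (μ j.succ) (μ j.castSucc) ^ (1 / p)) ^ p := by
        gcongr
        exact doubleDiffIntegral_rpow_le_sum_chain hp hu n μ
    _ ≤ _ := by
        simpa only [hroot, Finset.card_univ, Fintype.card_fin] using
          ENNReal.rpow_sum_le_const_mul_sum_rpow (Finset.univ : Finset (Fin (n + 1)))
            (fun j => doubleDiffIntegral p u (μ j.succ) (μ j.castSucc) ^ (1 / p)) hp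

theorem setLIntegral_prod_le_card_rpow_mul_sum_chain (hp : 1 ≤ p) (hu : Measurable u)
    (μ : Measure α) [SFinite μ] (n : ℕ) (S : Fin (n + 2) → Set α)
    (hpos : ∀ j, μ (S j) ≠ 0) (hfin : ∀ j, μ (S j) ≠ ∞) :
    ∫⁻ z in S 0 ×ˢ S (Fin.last (n + 1)), ENNReal.ofReal (|u z.1 - u z.2| ^ p) ∂μ.prod μ ≤
      ((n + 1 : ℕ) : ℝ≥0∞) ^ (p - 1) * ∑ j : Fin (n + 1),
        μ (S 0) * μ (S (Fin.last (n + 1))) / (μ (S j.succ) * μ (S j.castSucc)) *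
          ∫⁻ z in S j.succ ×ˢ S j.castSucc, ENNReal.ofReal (|u z.1 - u z.2| ^ p) ∂μ.prod μ := by
  have hprob : ∀ j, IsProbabilityMeasure μ[|S j] := fun j =>
    cond_isProbabilityMeasure_of_finite (hpos j) (hfin j)
  have hint : ∀ i j, ∫⁻ z in S i ×ˢ S j, ENNReal.ofReal (|u z.1 - u z.2| ^ p) ∂μ.prod μ =
      μ (S i) * μ (S j) * doubleDiffIntegral p u μ[|S i] μ[|S j] := fun i j =>
    setLIntegral_prod_eq_mul_doubleDiffIntegral_cond μ (hpos i) (hfin i) (hpos j) (hfin j)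
  have hcoef : ∀ j : Fin (n + 1), ∀ x,
      μ (S 0) * μ (S (Fin.last (n + 1))) / (μ (S j.succ) * μ (S j.castSucc)) *
        (μ (S j.succ) * μ (S j.castSucc) * x) = μ (S 0) * μ (S (Fin.last (n + 1))) * x :=
    fun j x => by
      rw [← mul_assoc, ENNReal.div_mul_cancel (mul_ne_zero (hpos _) (hpos _))
        (ENNReal.mul_ne_top (hfin _) (hfin _))]
  simp only [hint, hcoef]
  rw [← Finset.mul_sum, mul_left_comm]
  gcongr
  exact doubleDiffIntegral_le_card_rpow_mul_sum_chain hp hu n fun j => μ[|S j]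

end DoubleDifference

theorem stmt4_general {d : ℕ} (ν r r' : ℝ) (N : ℕ)
    (p : ℝ) (hp : 1 < p)
    (η : Fin (N + 2) → EuclideanSpace ℝ (Fin d))
    (hchain : ∀ j : Fin (N + 1), dist (η j.succ) (η j.castSucc) ≤ r)
    (hrr' : r * (1 + 2 * ν) ≤ r')
    (F : Set (EuclideanSpace ℝ (Fin d)))
    (B : Fin (N + 2) → Set (EuclideanSpace ℝ (Fin d)))
    (hB : ∀ j, B j = F ∩ Metric.closedBall (η j) (ν * r))
    (hpos : ∀ j, 0 < volume (B j)) (hfin : ∀ j, volume (B j) < ⊤)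
    (u : EuclideanSpace ℝ (Fin d) → ℝ) (hu : Measurable u) :
    (∀ j : Fin (N + 1), (B j.succ ×ˢ B j.castSucc) ⊆
        (F ×ˢ F) ∩ {z : EuclideanSpace ℝ (Fin d) × EuclideanSpace ℝ (Fin d) |
          dist z.1 z.2 ≤ r'}) ∧
    (∫⁻ z in B 0 ×ˢ B (Fin.last (N + 1)),
        ENNReal.ofReal (|u z.1 - u z.2| ^ p) ∂(volume.prod volume)) ≤
      ENNReal.ofReal ((N + 1 : ℝ) ^ (p - 1)) *
        (⨆ j : Fin (N + 1),
          volume (B 0) * volume (B (Fin.last (N + 1))) /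
            (volume (B j.succ) * volume (B j.castSucc))) *
        ∑ j : Fin (N + 1),
          ∫⁻ z in B j.succ ×ˢ B j.castSucc,
            ENNReal.ofReal (|u z.1 - u z.2| ^ p) ∂(volume.prod volume) := by
  refine ⟨fun j => ?_, ?_⟩
  · rw [hB, hB]
    exact prod_inter_closedBall_subset_inter_dist_le F (hchain j) (by linarith)
  have hcard : ((N + 1 : ℕ) : ℝ≥0∞) ^ (p - 1) = ENNReal.ofReal ((N + 1 : ℝ) ^ (p - 1)) := by
    rw [← ENNReal.ofReal_rpow_of_nonneg (by positivity) (by linarith)]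
    norm_cast
  rw [← hcard, mul_assoc]
  refine (setLIntegral_prod_le_card_rpow_mul_sum_chain hp.le hu volume N B (fun j => (hpos j).ne')
    (fun j => (hfin j).ne)).trans ?_
  gcongr
  rw [Finset.mul_sum]
  gcongr with j
  exact le_iSup (fun j : Fin (N + 1) => volume (B 0) * volume (B (Fin.last (N + 1))) /
    (volume (B j.succ) * volume (B j.castSucc))) j

/-- Chaining estimate along a discrete path of overlapping balls: with
`B_j = F ∩ B(η_j, νr)` of positive finite measure, `|η_{j+1} − η_j| ≤ r` and
`r(1+2ν) ≤ r'`, each `B_j × B_{j−1} ⊆ (F × F) ∩ D_{r'}` and the double-difference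
integral between the endpoints is controlled by the short-range ones. -/
theorem stmt4 {d : ℕ} (ν r r' : ℝ) (hν : 0 < ν) (hr : 0 < r) (N : ℕ)
    (p : ℝ) (hp : 1 < p)
    (η : Fin (N + 2) → EuclideanSpace ℝ (Fin d))
    (hchain : ∀ j : Fin (N + 1), dist (η j.succ) (η j.castSucc) ≤ r)
    (hrr' : r * (1 + 2 * ν) ≤ r')
    (F : Set (EuclideanSpace ℝ (Fin d))) (hF : MeasurableSet F)
    (B : Fin (N + 2) → Set (EuclideanSpace ℝ (Fin d)))
    (hB : ∀ j, B j = F ∩ Metric.closedBall (η j) (ν * r))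
    (hpos : ∀ j, 0 < volume (B j)) (hfin : ∀ j, volume (B j) < ⊤)
    (u : EuclideanSpace ℝ (Fin d) → ℝ) (hu : Measurable u) :
    (∀ j : Fin (N + 1), (B j.succ ×ˢ B j.castSucc) ⊆
        (F ×ˢ F) ∩ {z : EuclideanSpace ℝ (Fin d) × EuclideanSpace ℝ (Fin d) |
          dist z.1 z.2 ≤ r'}) ∧
    (∫⁻ z in B 0 ×ˢ B (Fin.last (N + 1)),
        ENNReal.ofReal (|u z.1 - u z.2| ^ p) ∂(volume.prod volume)) ≤
      ENNReal.ofReal ((N + 1 : ℝ) ^ (p - 1)) *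
        (⨆ j : Fin (N + 1),
          volume (B 0) * volume (B (Fin.last (N + 1))) /
            (volume (B j.succ) * volume (B j.castSucc))) *
        ∑ j : Fin (N + 1),
          ∫⁻ z in B j.succ ×ˢ B j.castSucc,
            ENNReal.ofReal (|u z.1 - u z.2| ^ p) ∂(volume.prod volume) :=
  stmt4_general ν r r' N p hp η hchain hrr' F B hB hpos hfin u hu
end

section
/- Let B be the open unit ball in ℝ², let ω := {(x,y) ∈ ℝ² : x ∈ (−1,2), −x+1 ≤ y ≤ −x+2}, and define u : B → ℝ by u = 1 on B \ ω and u = 0 on B ∩ ω. Then for every R > 0 and p ∈ (1,∞): ∫_{((B∩ω)×(B∩ω)) ∩ D_R} |u(x)−u(y)|^p dx dy = 0, while if Φ(u) denotes the extension of u to ω obtained by reflection across ∂B (Φ(u)(z) = u(z/|z|²) for z ∈ ω \ B̄ close to ∂B), then for every R > 0, ∫_{(ω×ω) ∩ D_R} |Φ(u)(x)−Φ(u)(y)|^p dx dy > 0. Hence no constant C can satisfy the extension estimate with ω' = ω. -/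
open MeasureTheory ENNReal Set
open scoped Classical

/-!
Inside `B` the function vanishes on all of `B ∩ ω`, so its energy there is zero. But the corner
of `ω` at `(1, 0)` pokes out of `B`, and inversion in the unit circle maps a small box of that
corner, just outside `B`, below the line `x + y = 1`, i.e. outside `ω`, where `u = 1`. So the
reflection equals `1` on that box and `0` on a box of `B ∩ ω` within distance `R` of it, and
the two boxes contribute a positive amount to the energy of the reflection.
-/

section NonlocalEnergy

variable {E : Type*} [PseudoMetricSpace E] [MeasureSpace E]

noncomputable def nonlocalEnergy (A : Set E) (R p : ℝ) (f : E → ℝ) : ℝ≥0∞ :=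
  ∫⁻ z in (A ×ˢ A) ∩ {z : E × E | dist z.1 z.2 ≤ R},
    ENNReal.ofReal (|f z.1 - f z.2| ^ p) ∂(volume.prod volume)

theorem nonlocalEnergy_eq_zero_of_eqOn_const {A : Set E} {R p c : ℝ} {f : E → ℝ}
    (hA : MeasurableSet A) (hp : p ≠ 0) (hf : EqOn f (fun _ => c) A) :
    nonlocalEnergy A R p f = 0 := by
  refine nonpos_iff_eq_zero.mp ((lintegral_mono_set inter_subset_left).trans_eq ?_)
  refine setLIntegral_eq_zero (hA.prod hA) ?_
  rintro z ⟨h₁, h₂⟩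
  simp [hf h₁, hf h₂, Real.zero_rpow hp]

theorem ofReal_mul_volume_le_nonlocalEnergy [SFinite (volume : Measure E)]
    {A S T : Set E} {R p a b : ℝ} {f : E → ℝ} (hS : MeasurableSet S) (hT : MeasurableSet T)
    (hSA : S ⊆ A) (hTA : T ⊆ A) (hST : ∀ x ∈ S, ∀ y ∈ T, dist x y ≤ R)
    (hfS : EqOn f (fun _ => a) S) (hfT : EqOn f (fun _ => b) T) :
    ENNReal.ofReal (|a - b| ^ p) * (volume S * volume T) ≤ nonlocalEnergy A R p f :=
  calc ENNReal.ofReal (|a - b| ^ p) * (volume S * volume T)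
      = ∫⁻ _ in S ×ˢ T, ENNReal.ofReal (|a - b| ^ p) ∂(volume.prod volume) := by
        rw [setLIntegral_const, Measure.prod_prod]
    _ = ∫⁻ z in S ×ˢ T, ENNReal.ofReal (|f z.1 - f z.2| ^ p) ∂(volume.prod volume) :=
        setLIntegral_congr_fun (hS.prod hT) fun z hz => by rw [hfS hz.1, hfT hz.2]
    _ ≤ nonlocalEnergy A R p f :=
        lintegral_mono_set fun z hz => ⟨⟨hSA hz.1, hTA hz.2⟩, hST _ hz.1 _ hz.2⟩

theorem nonlocalEnergy_pos [SFinite (volume : Measure E)]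
    {A S T : Set E} {R p a b : ℝ} {f : E → ℝ} (hS : MeasurableSet S) (hT : MeasurableSet T)
    (hS₀ : 0 < volume S) (hT₀ : 0 < volume T) (hSA : S ⊆ A) (hTA : T ⊆ A)
    (hST : ∀ x ∈ S, ∀ y ∈ T, dist x y ≤ R)
    (hfS : EqOn f (fun _ => a) S) (hfT : EqOn f (fun _ => b) T) (hab : a ≠ b) :
    0 < nonlocalEnergy A R p f := by
  refine lt_of_lt_of_le ?_ (ofReal_mul_volume_le_nonlocalEnergy hS hT hSA hTA hST hfS hfT)
  have hpow : 0 < |a - b| ^ p := Real.rpow_pos_of_pos (abs_pos.mpr (sub_ne_zero.mpr hab)) p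
  exact ENNReal.mul_pos (ENNReal.ofReal_pos.mpr hpow).ne' (ENNReal.mul_pos hS₀.ne' hT₀.ne').ne'

end NonlocalEnergy

section Plane

local notation "ℝ²" => EuclideanSpace ℝ (Fin 2)

def diagonalStrip : Set ℝ² :=
  {z | z 0 ∈ Ioo (-1 : ℝ) 2 ∧ -(z 0) + 1 ≤ z 1 ∧ z 1 ≤ -(z 0) + 2}

theorem measurableSet_diagonalStrip : MeasurableSet diagonalStrip := by
  have h₀ := (EuclideanSpace.proj (𝕜 := ℝ) (0 : Fin 2)).continuous.measurable
  have h₁ := (EuclideanSpace.proj (𝕜 := ℝ) (1 : Fin 2)).continuous.measurable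
  exact (measurableSet_Ioo.preimage h₀).inter
    ((measurableSet_le (h₀.neg.add_const 1) h₁).inter (measurableSet_le h₁ (h₀.neg.add_const 2)))

def coordBox (a b c d : ℝ) : Set ℝ² := {z | z 0 ∈ Ioo a b ∧ z 1 ∈ Ioo c d}

theorem isOpen_coordBox (a b c d : ℝ) : IsOpen (coordBox a b c d) :=
  (isOpen_Ioo.preimage (EuclideanSpace.proj (𝕜 := ℝ) (0 : Fin 2)).continuous).inter
    (isOpen_Ioo.preimage (EuclideanSpace.proj (𝕜 := ℝ) (1 : Fin 2)).continuous)

theorem volume_coordBox_pos {a b c d : ℝ} (hab : a < b) (hcd : c < d) :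
    0 < volume (coordBox a b c d) := by
  refine (isOpen_coordBox a b c d).measure_pos volume ⟨!₂[(a + b) / 2, (c + d) / 2], ?_⟩
  simp only [coordBox, mem_ofPred_eq, mem_Ioo]
  norm_num
  constructor <;> constructor <;> linarith

theorem real_norm_sq_eq_two (z : ℝ²) : ‖z‖ ^ 2 = z 0 ^ 2 + z 1 ^ 2 := by
  simp [EuclideanSpace.real_norm_sq_eq, Fin.sum_univ_two]

def outerBox (t : ℝ) : Set ℝ² := coordBox (1 + t / 2) (1 + t) 0 (t / 4)

def innerBox (t : ℝ) : Set ℝ² := coordBox (1 - 7 * t / 8) (1 - 3 * t / 4) (7 * t / 8) t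

variable {t : ℝ}

theorem outerBox_subset_diagonalStrip (ht : t ≤ 1 / 2) : outerBox t ⊆ diagonalStrip := by
  rintro z ⟨⟨h₁, h₂⟩, h₃, h₄⟩
  exact ⟨⟨by linarith, by linarith⟩, by linarith, by linarith⟩

theorem outerBox_subset_compl_ball (ht : 0 ≤ t) : outerBox t ⊆ (Metric.ball 0 1)ᶜ := by
  rintro z ⟨⟨h₁, -⟩, -⟩ hz
  rw [mem_ball_zero_iff] at hz
  nlinarith [real_norm_sq_eq_two z, norm_nonneg z, sq_nonneg (z 1)]

theorem inv_norm_sq_smul_notMem_diagonalStrip (ht : 0 ≤ t) {z : ℝ²} (hz : z ∈ outerBox t) :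
    (‖z‖ ^ 2)⁻¹ • z ∉ diagonalStrip := by
  obtain ⟨⟨h₁, -⟩, h₃, h₄⟩ := hz
  rintro ⟨-, hlow, -⟩
  have hsq := real_norm_sq_eq_two z
  have hpos : 0 < ‖z‖ ^ 2 := by nlinarith
  -- the inversion lands below `x + y = 1` exactly when `z 0 + z 1 < ‖z‖ ^ 2`
  have hsum : z 0 + z 1 < ‖z‖ ^ 2 := by nlinarith
  simp only [PiLp.smul_apply, smul_eq_mul] at hlow
  have : (‖z‖ ^ 2)⁻¹ * (z 0 + z 1) < 1 := by rwa [inv_mul_lt_iff₀ hpos, mul_one]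
  linarith [mul_add (‖z‖ ^ 2)⁻¹ (z 0) (z 1)]

theorem innerBox_subset_diagonalStrip (ht : t ≤ 1 / 2) : innerBox t ⊆ diagonalStrip := by
  rintro z ⟨⟨h₁, h₂⟩, h₃, h₄⟩
  exact ⟨⟨by linarith, by linarith⟩, by linarith, by linarith⟩

theorem innerBox_subset_ball (ht₀ : 0 ≤ t) (ht : t ≤ 1 / 2) : innerBox t ⊆ Metric.ball 0 1 := by
  rintro z ⟨⟨h₁, h₂⟩, h₃, h₄⟩
  rw [mem_ball_zero_iff, ← sq_lt_one_iff₀ (norm_nonneg z), real_norm_sq_eq_two]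
  nlinarith

theorem dist_le_of_mem_outerBox_of_mem_innerBox {x y : ℝ²} (hx : x ∈ outerBox t)
    (hy : y ∈ innerBox t) : dist x y ≤ 3 * t := by
  obtain ⟨⟨h₁, h₂⟩, h₃, h₄⟩ := hx
  obtain ⟨⟨h₅, h₆⟩, h₇, h₈⟩ := hy
  rw [dist_eq_norm, ← sq_le_sq₀ (norm_nonneg _) (by linarith), real_norm_sq_eq_two]
  simp only [PiLp.sub_apply]
  nlinarith

end Plane

/-- Counterexample showing the extension estimate fails with `ω' = ω`: on the unit ball
`B ⊆ ℝ²` and the strip `ω`, the function `u = 0` on `B ∩ ω`, `u = 1` on `B \ ω` has zero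
non-local energy on `B ∩ ω`, but its reflection `Φ(u)` across `∂B` has positive non-local
energy on `ω`, for every interaction radius `R > 0`; hence no extension constant exists. -/
theorem stmt11
    (B : Set (EuclideanSpace ℝ (Fin 2))) (hB : B = Metric.ball (0 : EuclideanSpace ℝ (Fin 2)) 1)
    (ω : Set (EuclideanSpace ℝ (Fin 2)))
    (hω : ω = {z : EuclideanSpace ℝ (Fin 2) |
      z 0 ∈ Set.Ioo (-1 : ℝ) 2 ∧ -(z 0) + 1 ≤ z 1 ∧ z 1 ≤ -(z 0) + 2})
    (u : EuclideanSpace ℝ (Fin 2) → ℝ)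
    (hu : ∀ z, u z = if z ∈ ω then 0 else 1)
    (Φu : EuclideanSpace ℝ (Fin 2) → ℝ)
    (hΦu : ∀ z, Φu z = if z ∈ B then u z else u ((‖z‖ ^ 2)⁻¹ • z)) :
    ∀ R : ℝ, 0 < R → ∀ p : ℝ, 1 < p →
      (∫⁻ z in ((B ∩ ω) ×ˢ (B ∩ ω)) ∩
          {z : EuclideanSpace ℝ (Fin 2) × EuclideanSpace ℝ (Fin 2) | dist z.1 z.2 ≤ R},
          ENNReal.ofReal (|u z.1 - u z.2| ^ p) ∂(volume.prod volume)) = 0 ∧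
      0 < (∫⁻ z in (ω ×ˢ ω) ∩
          {z : EuclideanSpace ℝ (Fin 2) × EuclideanSpace ℝ (Fin 2) | dist z.1 z.2 ≤ R},
          ENNReal.ofReal (|Φu z.1 - Φu z.2| ^ p) ∂(volume.prod volume)) ∧
      ∀ C : ℝ≥0∞,
        ¬ ((∫⁻ z in (ω ×ˢ ω) ∩
            {z : EuclideanSpace ℝ (Fin 2) × EuclideanSpace ℝ (Fin 2) | dist z.1 z.2 ≤ R},
            ENNReal.ofReal (|Φu z.1 - Φu z.2| ^ p) ∂(volume.prod volume)) ≤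
          C * ∫⁻ z in ((B ∩ ω) ×ˢ (B ∩ ω)) ∩
            {z : EuclideanSpace ℝ (Fin 2) × EuclideanSpace ℝ (Fin 2) | dist z.1 z.2 ≤ R},
            ENNReal.ofReal (|u z.1 - u z.2| ^ p) ∂(volume.prod volume)) := by
  intro R hR p hp
  subst hB
  obtain rfl : ω = diagonalStrip := hω
  set t := min (R / 3) (1 / 2)
  have ht₀ : 0 < t := lt_min (by linarith) (by norm_num)
  have ht : t ≤ 1 / 2 := min_le_right _ _
  have hzero : nonlocalEnergy (Metric.ball 0 1 ∩ diagonalStrip) R p u = 0 :=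
    nonlocalEnergy_eq_zero_of_eqOn_const (c := 0)
      (measurableSet_ball.inter measurableSet_diagonalStrip) (by linarith)
      fun z hz => by rw [hu, if_pos hz.2]
  have hpos : 0 < nonlocalEnergy diagonalStrip R p Φu := by
    refine nonlocalEnergy_pos (a := 1) (b := 0) (isOpen_coordBox _ _ _ _).measurableSet
      (isOpen_coordBox _ _ _ _).measurableSet (volume_coordBox_pos (by linarith) (by linarith))
      (volume_coordBox_pos (by linarith) (by linarith)) (outerBox_subset_diagonalStrip ht)
      (innerBox_subset_diagonalStrip ht) (fun x hx y hy => ?_) (fun z hz => ?_)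
      (fun z hz => ?_) one_ne_zero
    · exact (dist_le_of_mem_outerBox_of_mem_innerBox hx hy).trans
        (by linarith [min_le_left (R / 3) (1 / 2)])
    · rw [hΦu, if_neg (outerBox_subset_compl_ball ht₀.le hz), hu,
        if_neg (inv_norm_sq_smul_notMem_diagonalStrip ht₀.le hz)]
    · rw [hΦu, if_pos (innerBox_subset_ball ht₀.le ht hz), hu,
        if_pos (innerBox_subset_diagonalStrip ht hz)]
  refine ⟨hzero, hpos, fun C h => hpos.not_ge ?_⟩
  calc nonlocalEnergy diagonalStrip R p Φu
      ≤ C * nonlocalEnergy (Metric.ball 0 1 ∩ diagonalStrip) R p u := h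
    _ = 0 := by rw [hzero, mul_zero]
end
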